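/- Let β ∈ [1/2, log₂(3/2)], let C_β = 2·√(2^{β+1} − 2), and define B(t) = C_β · t(1 − t). Then for all real numbers x, y with 0 ≤ x ≤ y ≤ 1 and x ≥ y − B(y), one has ((y − x)^{1/β} + B(y)^{1/β})^β + B(x) ≥ 2·B((x + y)/2). -/

import Mathlib

/-!
Since `B` is a concave quadratic with leading coefficient `-C_β`, the midpoint defect is exact:
`2 B((x+y)/2) = B(x) + B(y) + (C_β/2)(y-x)²`. With `d = y - x ≤ b = B(y)` it therefore suffices to show
`b + (C_β/2) d² ≤ (d^{1/β} + b^{1/β})^β`. Scaling by `b` reduces this to `t = d/b ∈ [0,1]`, where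
`t^{1/β} ≥ t²` (as `1/β ≤ 2`) and concavity of `u ↦ (1+u)^β` on `[0,1]` give
`(t^{1/β} + 1)^β ≥ 1 + (2^β - 1) t²`; finally `(C_β/2) b ≤ C_β²/8 = 2^β - 1` because `B ≤ C_β/4`.
-/

/-- The quadratic polynomial `B(t) = C_β t(1−t)` with `C_β = 2√(2^{β+1} − 2)`. -/
noncomputable def Bquad (β t : ℝ) : ℝ := 2 * Real.sqrt ((2 : ℝ) ^ (β + 1) - 2) * (t * (1 - t))

open Real

lemma one_add_mul_le_one_add_rpow {q u : ℝ} (hq0 : 0 ≤ q) (hq1 : q ≤ 1) (hu0 : 0 ≤ u)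
    (hu1 : u ≤ 1) : 1 + (2 ^ q - 1) * u ≤ (1 + u) ^ q := by
  have h := (concaveOn_rpow hq0 hq1).2 (Set.mem_Ici.2 zero_le_one)
    (Set.mem_Ici.2 zero_le_two) (sub_nonneg.2 hu1) hu0 (sub_add_cancel 1 u)
  simp only [smul_eq_mul, one_rpow] at h
  rw [show (1 - u) * 1 + u * 2 = 1 + u by ring] at h
  linarith

lemma one_add_mul_sq_le_rpow_one_div_add_one_rpow {β t : ℝ} (hβ : 1 / 2 ≤ β) (hβ1 : β ≤ 1)
    (ht0 : 0 ≤ t) (ht1 : t ≤ 1) : 1 + (2 ^ β - 1) * t ^ 2 ≤ (t ^ (1 / β) + 1) ^ β := by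
  have hβ0 : 0 < β := by linarith
  have hsq_le : t ^ (2 : ℝ) ≤ t ^ (1 / β) := by
    rcases ht0.eq_or_lt with rfl | ht
    · rw [zero_rpow two_ne_zero]
      exact rpow_nonneg le_rfl _
    · exact rpow_le_rpow_of_exponent_ge ht ht1 (by rw [div_le_iff₀ hβ0]; linarith)
  rw [rpow_two] at hsq_le
  calc 1 + (2 ^ β - 1) * t ^ 2 ≤ (1 + t ^ 2) ^ β :=
        one_add_mul_le_one_add_rpow hβ0.le hβ1 (sq_nonneg t) (pow_le_one₀ ht0 ht1)
    _ ≤ (t ^ (1 / β) + 1) ^ β := by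
        rw [add_comm]
        exact rpow_le_rpow (by positivity) (by linarith) hβ0.le

lemma mul_rpow_one_div_add_mul_rpow_one_div_rpow {β a b c : ℝ} (hβ : β ≠ 0) (ha : 0 ≤ a)
    (hb : 0 ≤ b) (hc : 0 ≤ c) :
    ((c * a) ^ (1 / β) + (c * b) ^ (1 / β)) ^ β = c * (a ^ (1 / β) + b ^ (1 / β)) ^ β := by
  rw [mul_rpow hc ha, mul_rpow hc hb, ← mul_add, mul_rpow (by positivity) (by positivity),
    ← rpow_mul hc, one_div_mul_cancel hβ, rpow_one]

lemma add_mul_sq_le_rpow_one_div_add_rpow_one_div_rpow {β K b d : ℝ} (hβ : 1 / 2 ≤ β)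
    (hβ1 : β ≤ 1) (hKb : K * b ≤ 2 ^ β - 1) (hd0 : 0 ≤ d) (hdb : d ≤ b) :
    b + K * d ^ 2 ≤ (d ^ (1 / β) + b ^ (1 / β)) ^ β := by
  have hβ0 : β ≠ 0 := by positivity
  have hb0 : 0 ≤ b := hd0.trans hdb
  rcases hb0.eq_or_lt with rfl | hb
  · obtain rfl : d = 0 := le_antisymm hdb hd0
    rw [zero_pow two_ne_zero, mul_zero, zero_add]
    positivity
  set t := d / b
  have hdt : d = b * t := (mul_div_cancel₀ d hb.ne').symm
  have ht0 : 0 ≤ t := by positivity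
  have ht1 : t ≤ 1 := div_le_one_of_le₀ hdb hb0
  calc b + K * d ^ 2 = b * (1 + K * b * t ^ 2) := by rw [hdt]; ring
    _ ≤ b * (1 + (2 ^ β - 1) * t ^ 2) := by gcongr
    _ ≤ b * (t ^ (1 / β) + 1) ^ β := by
        gcongr; exact one_add_mul_sq_le_rpow_one_div_add_one_rpow hβ hβ1 ht0 ht1
    _ = b * (t ^ (1 / β) + 1 ^ (1 / β)) ^ β := by rw [one_rpow]
    _ = ((b * t) ^ (1 / β) + (b * 1) ^ (1 / β)) ^ β :=
        (mul_rpow_one_div_add_mul_rpow_one_div_rpow hβ0 ht0 zero_le_one hb0).symm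
    _ = (d ^ (1 / β) + b ^ (1 / β)) ^ β := by rw [mul_one, ← hdt]

lemma two_mul_Bquad_midpoint (β x y : ℝ) :
    2 * Bquad β ((x + y) / 2) =
      Bquad β x + Bquad β y + √((2 : ℝ) ^ (β + 1) - 2) * (y - x) ^ 2 := by
  simp only [Bquad]; ring

lemma sqrt_mul_Bquad_le {β : ℝ} (hβ : 0 ≤ β) (t : ℝ) :
    √((2 : ℝ) ^ (β + 1) - 2) * Bquad β t ≤ 2 ^ β - 1 := by
  have hs : (2 : ℝ) ^ (β + 1) - 2 = 2 * (2 ^ β - 1) := by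
    rw [rpow_add two_pos, rpow_one]; ring
  have hpos : 0 ≤ (2 : ℝ) ^ β - 1 := sub_nonneg.2 (one_le_rpow one_le_two hβ)
  have hsq : √((2 : ℝ) ^ (β + 1) - 2) * √((2 : ℝ) ^ (β + 1) - 2) = 2 * (2 ^ β - 1) := by
    rw [mul_self_sqrt (by linarith), hs]
  calc √((2 : ℝ) ^ (β + 1) - 2) * Bquad β t
        = 4 * (2 ^ β - 1) * (t * (1 - t)) := by
          simp only [Bquad]; linear_combination 2 * (t * (1 - t)) * hsq
    _ ≤ 4 * (2 ^ β - 1) * (1 / 4) := by gcongr; nlinarith [sq_nonneg (t - 1 / 2)]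
    _ = 2 ^ β - 1 := by ring

theorem two_point_quad_power_general (β : ℝ) (hβ : β ∈ Set.Icc (1 / 2 : ℝ) (Real.logb 2 (3 / 2)))
    (x y : ℝ) (hxy : x ≤ y) (hx : y - Bquad β y ≤ x) :
    ((y - x) ^ (1 / β) + (Bquad β y) ^ (1 / β)) ^ β + Bquad β x ≥
      2 * Bquad β ((x + y) / 2) := by
  obtain ⟨hβ_ge, hβ_le⟩ := hβ
  have hβ1 : β ≤ 1 := by
    calc β ≤ logb 2 (3 / 2) := hβ_le
      _ ≤ logb 2 2 := logb_le_logb_of_le one_lt_two (by norm_num) (by norm_num)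
      _ = 1 := logb_self_eq_one one_lt_two
  have key := add_mul_sq_le_rpow_one_div_add_rpow_one_div_rpow hβ_ge hβ1
    (sqrt_mul_Bquad_le (by linarith) y) (sub_nonneg.2 hxy) (by linarith : y - x ≤ Bquad β y)
  rw [ge_iff_le, two_mul_Bquad_midpoint]
  linarith

/-- for `β ∈ [1/2, log₂(3/2)]`, `0 ≤ x ≤ y ≤ 1` with `x ≥ y − B(y)`,
`((y−x)^{1/β} + B(y)^{1/β})^β + B(x) ≥ 2 B((x+y)/2)`. -/
theorem two_point_quad_power (β : ℝ) (hβ : β ∈ Set.Icc (1 / 2 : ℝ) (Real.logb 2 (3 / 2)))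
    (x y : ℝ) (hx0 : 0 ≤ x) (hxy : x ≤ y) (hy1 : y ≤ 1) (hx : y - Bquad β y ≤ x) :
    ((y - x) ^ (1 / β) + (Bquad β y) ^ (1 / β)) ^ β + Bquad β x ≥
      2 * Bquad β ((x + y) / 2) :=
  two_point_quad_power_general β hβ x y hxy hx
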